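/- arXiv:1808.01447 — 4 statements merged into one kernel-verified Lean document; each statement's English description precedes it below -/
import Mathlib

section
/- Let γ(t) := ∫₀ᵗ e^τ e^{−1/τ} dτ. There are no positive constants λ, M such that γ''(t)/γ'(t) − γ''(s)/γ'(s) ≥ λ(s−t)^M/(s+t)^{M+1} for all 0 < t < s (the weak CZ condition fails). In particular, taking s = 2t forces λ/3^{M+1} ≤ 3/(4t) for all t > 0, a contradiction as t → ∞. -/
open Real Set

noncomputable def fCZ : ℝ → ℝ := fun τ => Real.exp τ * Real.exp (-1 / τ)

lemma fCZ_meas : Measurable fCZ := by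
  have h1 : Measurable fun τ : ℝ => -1 / τ := by
    simpa [div_eq_mul_inv] using measurable_inv.const_mul (-1:ℝ)
  exact Real.measurable_exp.mul (Real.measurable_exp.comp h1)

lemma fCZ_intable (t : ℝ) (ht : 0 < t) :
    IntervalIntegrable fCZ MeasureTheory.volume 0 t := by
  apply IntervalIntegrable.mono_fun (intervalIntegrable_const (c := Real.exp t))
  · exact fCZ_meas.aestronglyMeasurable
  · rw [Filter.EventuallyLE, MeasureTheory.ae_restrict_iff' measurableSet_uIoc]
    filter_upwards with x hx
    rw [Set.uIoc_of_le ht.le] at hx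
    have hx0 : 0 < x := hx.1
    have hxt : x ≤ t := hx.2
    have h1 : Real.exp (-1 / x) ≤ 1 := by
      have : -1 / x ≤ 0 := by
        apply div_nonpos_of_nonpos_of_nonneg <;> linarith
      simpa using Real.exp_le_exp.mpr this
    simp only [fCZ, Real.norm_eq_abs, abs_of_pos (by positivity : (0:ℝ) < Real.exp x * Real.exp (-1/x)), abs_of_pos (Real.exp_pos t)]
    calc Real.exp x * Real.exp (-1 / x) ≤ Real.exp x * 1 := by
          exact mul_le_mul_of_nonneg_left h1 (Real.exp_pos x).le
      _ ≤ Real.exp t := by rw [mul_one]; exact Real.exp_le_exp.mpr hxt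

lemma hasDeriv_gamma (γ : ℝ → ℝ)
    (hγ : ∀ t : ℝ, 0 ≤ t → γ t = ∫ τ in (0:ℝ)..t, Real.exp τ * Real.exp (-1 / τ))
    (t : ℝ) (ht : 0 < t) : HasDerivAt γ (fCZ t) t := by
  have hcont : ContinuousAt fCZ t := by
    have h1 : ContinuousAt (fun τ : ℝ => -1 / τ) t :=
      ContinuousAt.div continuousAt_const continuousAt_id ht.ne'
    exact (Real.continuous_exp.continuousAt).mul (Real.continuous_exp.continuousAt.comp h1)
  have hF : HasDerivAt (fun u => ∫ τ in (0:ℝ)..u, fCZ τ) (fCZ t) t :=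
    intervalIntegral.integral_hasDerivAt_right (fCZ_intable t ht)
      ⟨univ, Filter.univ_mem, fCZ_meas.aestronglyMeasurable.restrict⟩ hcont
  apply hF.congr_of_eventuallyEq
  filter_upwards [Ioi_mem_nhds ht] with s hs
  exact hγ s (le_of_lt hs)

lemma hasDeriv_fCZ (t : ℝ) (ht : 0 < t) :
    HasDerivAt fCZ (fCZ t * (1 + 1 / t ^ 2)) t := by
  have h1 : HasDerivAt (fun s : ℝ => -1 / s) (1 / t ^ 2) t := by
    have h := (hasDerivAt_inv ht.ne').neg
    have heq : (fun s : ℝ => -s⁻¹) = fun s : ℝ => -1 / s := by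
      funext s; rw [neg_div, one_div]
    rw [show (-fun y : ℝ => y⁻¹) = fun s : ℝ => -s⁻¹ from rfl, heq] at h
    refine h.congr_deriv ?_
    rw [neg_neg, one_div]
  have h2 : HasDerivAt (fun s : ℝ => Real.exp (-1 / s))
      (Real.exp (-1 / t) * (1 / t ^ 2)) t := h1.exp
  have h3 := (Real.hasDerivAt_exp t).mul h2
  refine h3.congr_deriv ?_
  unfold fCZ
  ring

lemma fCZ_pos (t : ℝ) : 0 < fCZ t := by
  unfold fCZ; positivity

theorem example_curve_fails_wCZ
    (γ : ℝ → ℝ)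
    (hγ : ∀ t : ℝ, 0 ≤ t → γ t = ∫ τ in (0:ℝ)..t, Real.exp τ * Real.exp (-1 / τ)) :
    ¬ ∃ lam M : ℝ, 0 < lam ∧ 0 < M ∧
        ∀ t s : ℝ, 0 < t → t < s →
          lam * (s - t) ^ M / (s + t) ^ (M + 1)
            ≤ deriv (deriv γ) t / deriv γ t - deriv (deriv γ) s / deriv γ s := by
  rintro ⟨lam, M, hlam, hM, h⟩
  -- derivative facts
  have hd1 : ∀ u : ℝ, 0 < u → deriv γ u = fCZ u := fun u hu =>
    (hasDeriv_gamma γ hγ u hu).deriv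
  have hd2 : ∀ u : ℝ, 0 < u → deriv (deriv γ) u = fCZ u * (1 + 1 / u ^ 2) := by
    intro u hu
    have heq : deriv γ =ᶠ[nhds u] fCZ := by
      filter_upwards [Ioi_mem_nhds hu] with v hv
      exact hd1 v hv
    rw [heq.deriv_eq]
    exact (hasDeriv_fCZ u hu).deriv
  have hratio : ∀ u : ℝ, 0 < u →
      deriv (deriv γ) u / deriv γ u = 1 + 1 / u ^ 2 := by
    intro u hu
    rw [hd1 u hu, hd2 u hu, mul_comm, mul_div_assoc, div_self (fCZ_pos u).ne', mul_one]
  -- choose t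
  set c : ℝ := (3:ℝ) ^ (M + 1) with hc
  have hcpos : 0 < c := Real.rpow_pos_of_pos (by norm_num) _
  set t : ℝ := c / lam with htdef
  have ht : 0 < t := by positivity
  have hts : t < 2 * t := by linarith
  have key := h t (2 * t) ht hts
  rw [hratio t ht, hratio (2 * t) (by linarith)] at key
  have h2t : (2 * t - t) = t := by ring
  have h3t : (2 * t + t) = 3 * t := by ring
  rw [h2t, h3t] at key
  have hrw : (3 * t) ^ (M + 1) = c * (t ^ M * t) := by
    rw [Real.mul_rpow (by norm_num) ht.le, hc, Real.rpow_add_one ht.ne' M]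
  rw [hrw] at key
  have htM : 0 < t ^ M := Real.rpow_pos_of_pos ht _
  -- key : lam * t ^ M / (c * (t ^ M * t)) ≤ 1 + 1/t^2 - (1 + 1/(2t)^2)
  have hlhs : lam * t ^ M / (c * (t ^ M * t)) = lam / (c * t) := by
    field_simp
  have hrhs : 1 + 1 / t ^ 2 - (1 + 1 / (2 * t) ^ 2) = 3 / (4 * t ^ 2) := by
    field_simp
    ring
  rw [hlhs, hrhs] at key
  rw [div_le_div_iff₀ (by positivity) (by positivity)] at key
  -- key : lam * (4 * t^2) ≤ 3 * (c * t),  with t = c / lam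
  have htc : lam * t = c := by
    rw [htdef]
    field_simp
  nlinarith [key, htc, hcpos, hlam, ht, sq_nonneg (lam * t - c)]
end

section
/- Let γ ∈ C²(0,∞) with γ' > 0 and γ'' > 0 on (0,∞), and suppose γ''/γ' is (weakly) decreasing on (0,∞). Then the function g(s,t) := (γ(s) − γ(t))/(γ'(s) − γ'(t)), defined for s > t > 0, is monotone nondecreasing in each of s and t separately. -/
open Real Set

theorem g_monotone_in_each_variable
    (γ : ℝ → ℝ)
    (hsmooth : ContDiffOn ℝ 2 γ (Set.Ioi 0))
    (hfirst : ∀ t > 0, 0 < deriv γ t)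
    (hsecond : ∀ t > 0, 0 < deriv (deriv γ) t)
    (hratio : AntitoneOn (fun t => deriv (deriv γ) t / deriv γ t) (Set.Ioi 0)) :
    (∀ t > (0:ℝ), ∀ s₁ s₂ : ℝ, t < s₁ → s₁ ≤ s₂ →
      (γ s₁ - γ t) / (deriv γ s₁ - deriv γ t)
        ≤ (γ s₂ - γ t) / (deriv γ s₂ - deriv γ t)) ∧
    (∀ s : ℝ, ∀ t₁ t₂ : ℝ, 0 < t₁ → t₁ ≤ t₂ → t₂ < s →
      (γ s - γ t₁) / (deriv γ s - deriv γ t₁)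
        ≤ (γ s - γ t₂) / (deriv γ s - deriv γ t₂)) := by
  have hsmooth' : ContDiffOn ℝ (1 + 1) γ (Set.Ioi 0) := by
    convert hsmooth using 2
    norm_num
  have hsplit := (contDiffOn_succ_iff_deriv_of_isOpen (n := 1) (f := γ) isOpen_Ioi).mp hsmooth'
  have hdγ : DifferentiableOn ℝ γ (Ioi 0) := hsplit.1
  have hdγ' : DifferentiableOn ℝ (deriv γ) (Ioi 0) := hsplit.2.2.differentiableOn one_ne_zero
  have hcont : ContinuousOn γ (Ioi 0) := hdγ.continuousOn
  have hcont' : ContinuousOn (deriv γ) (Ioi 0) := hdγ'.continuousOn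
  have hD1 : ∀ x ∈ Ioi (0:ℝ), HasDerivAt γ (deriv γ x) x := fun x hx =>
    (hdγ.differentiableAt (Ioi_mem_nhds hx)).hasDerivAt
  have hD2 : ∀ x ∈ Ioi (0:ℝ), HasDerivAt (deriv γ) (deriv (deriv γ) x) x := fun x hx =>
    (hdγ'.differentiableAt (Ioi_mem_nhds hx)).hasDerivAt
  have hmono : StrictMonoOn γ (Ioi 0) := by
    apply strictMonoOn_of_deriv_pos (convex_Ioi 0) hcont
    intro x hx
    rw [interior_Ioi] at hx
    exact hfirst x hx
  have hmono' : StrictMonoOn (deriv γ) (Ioi 0) := by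
    apply strictMonoOn_of_deriv_pos (convex_Ioi 0) hcont'
    intro x hx
    rw [interior_Ioi] at hx
    exact hsecond x hx
  have key : ∀ t s : ℝ, 0 < t → t < s →
      deriv (deriv γ) s * (γ s - γ t) ≤ deriv γ s * (deriv γ s - deriv γ t) ∧
      deriv γ t * (deriv γ s - deriv γ t) ≤ deriv (deriv γ) t * (γ s - γ t) := by
    intro t s ht hts
    have hIcc : Icc t s ⊆ Ioi 0 := fun x hx => lt_of_lt_of_le ht hx.1
    have hIoo : Ioo t s ⊆ Ioi 0 := fun x hx => lt_trans ht hx.1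
    obtain ⟨c, hc, hceq⟩ := exists_ratio_hasDerivAt_eq_ratio_slope γ (deriv γ) hts
      (hcont.mono hIcc) (fun x hx => hD1 x (hIoo hx))
      (deriv γ) (deriv (deriv γ)) (hcont'.mono hIcc) (fun x hx => hD2 x (hIoo hx))
    have hc0 : c ∈ Ioi (0:ℝ) := hIoo hc
    have hs0 : s ∈ Ioi (0:ℝ) := lt_trans ht hts
    have ht0 : t ∈ Ioi (0:ℝ) := ht
    have h1 : deriv (deriv γ) s / deriv γ s ≤ deriv (deriv γ) c / deriv γ c :=
      hratio hc0 hs0 hc.2.le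
    have h2' : deriv (deriv γ) c / deriv γ c ≤ deriv (deriv γ) t / deriv γ t :=
      hratio ht0 hc0 hc.1.le
    have pγ's := hfirst s hs0
    have pγ't := hfirst t ht0
    have pγ'c := hfirst c hc0
    have hA : 0 < γ s - γ t := sub_pos.mpr (hmono ht0 hs0 hts)
    have hB : 0 < deriv γ s - deriv γ t := sub_pos.mpr (hmono' ht0 hs0 hts)
    have h1' : deriv (deriv γ) s * deriv γ c ≤ deriv (deriv γ) c * deriv γ s :=
      (div_le_div_iff₀ pγ's pγ'c).mp h1
    have h2'' : deriv (deriv γ) c * deriv γ t ≤ deriv (deriv γ) t * deriv γ c :=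
      (div_le_div_iff₀ pγ'c pγ't).mp h2'
    constructor
    · nlinarith [mul_le_mul_of_nonneg_right h1' hA.le]
    · nlinarith [mul_le_mul_of_nonneg_right h2'' hA.le]
  constructor
  · -- monotone in s
    intro t ht s₁ s₂ hts₁ hs₁₂
    have hder : ∀ x ∈ Ioi t, HasDerivAt (fun s => (γ s - γ t) / (deriv γ s - deriv γ t))
        ((deriv γ x * (deriv γ x - deriv γ t) - (γ x - γ t) * deriv (deriv γ) x)
          / (deriv γ x - deriv γ t)^2) x := by
      intro x hx
      have hx0 : x ∈ Ioi (0:ℝ) := lt_trans ht hx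
      have hBne : deriv γ x - deriv γ t ≠ 0 :=
        ne_of_gt (sub_pos.mpr (hmono' (mem_Ioi.mpr ht) hx0 hx))
      exact ((hD1 x hx0).sub_const (γ t)).div ((hD2 x hx0).sub_const (deriv γ t)) hBne
    have hmonoh : MonotoneOn (fun s => (γ s - γ t) / (deriv γ s - deriv γ t)) (Ioi t) := by
      apply monotoneOn_of_deriv_nonneg (convex_Ioi t)
      · exact fun x hx => ((hder x hx).continuousAt).continuousWithinAt
      · rw [interior_Ioi]
        exact fun x hx => (hder x hx).differentiableAt.differentiableWithinAt
      · rw [interior_Ioi]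
        intro x hx
        rw [(hder x hx).deriv]
        have hnum : 0 ≤ deriv γ x * (deriv γ x - deriv γ t) - (γ x - γ t) * deriv (deriv γ) x := by
          nlinarith [(key t x ht hx).1]
        exact div_nonneg hnum (sq_nonneg _)
    exact hmonoh hts₁ (lt_of_lt_of_le hts₁ hs₁₂) hs₁₂
  · -- monotone in t
    intro s t₁ t₂ ht₁ ht₁₂ ht₂s
    have hder : ∀ x ∈ Ioo (0:ℝ) s, HasDerivAt (fun t => (γ s - γ t) / (deriv γ s - deriv γ t))
        ((-(deriv γ x) * (deriv γ s - deriv γ x) + (γ s - γ x) * deriv (deriv γ) x)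
          / (deriv γ s - deriv γ x)^2) x := by
      intro x hx
      have hx0 : x ∈ Ioi (0:ℝ) := hx.1
      have hs0 : s ∈ Ioi (0:ℝ) := lt_trans hx.1 hx.2
      have hBne : deriv γ s - deriv γ x ≠ 0 :=
        ne_of_gt (sub_pos.mpr (hmono' hx0 hs0 hx.2))
      have h := ((hD1 x hx0).const_sub (γ s)).div ((hD2 x hx0).const_sub (deriv γ s)) hBne
      change HasDerivAt (fun t => (γ s - γ t) / (deriv γ s - deriv γ t)) _ x at h
      convert h using 1
      ring
    have hmonok : MonotoneOn (fun t => (γ s - γ t) / (deriv γ s - deriv γ t)) (Ioo 0 s) := by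
      apply monotoneOn_of_deriv_nonneg (convex_Ioo 0 s)
      · exact fun x hx => ((hder x hx).continuousAt).continuousWithinAt
      · rw [interior_Ioo]
        exact fun x hx => (hder x hx).differentiableAt.differentiableWithinAt
      · rw [interior_Ioo]
        intro x hx
        rw [(hder x hx).deriv]
        have hnum : 0 ≤ -(deriv γ x) * (deriv γ s - deriv γ x)
            + (γ s - γ x) * deriv (deriv γ) x := by
          nlinarith [(key x s hx.1 hx.2).2]
        exact div_nonneg hnum (sq_nonneg _)
    exact hmonok ⟨ht₁, lt_of_le_of_lt ht₁₂ ht₂s⟩ ⟨lt_of_lt_of_le ht₁ ht₁₂, ht₂s⟩ ht₁₂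
end

section
/- Let γ ∈ C²(0,∞) with γ' > 0 and γ'' > 0 on (0,∞), and suppose γ''/γ' is decreasing on (0,∞). Fix x < y real, ω > 0, and k ∈ ℤ with k ≥ 0. Then the function Υ(z) := (γ(ω2^k(z−x)) − γ(ω2^k(z−y)))/(ω2^k γ'(ω2^k(z−x)) − ω2^k γ'(ω2^k(z−y))) is monotone nondecreasing in z on the set {z : 1 ≤ z − y < z − x ≤ 2}. -/
open Real Set

theorem upsilon_monotone
    (γ : ℝ → ℝ)
    (hsmooth : ContDiffOn ℝ 2 γ (Set.Ioi 0))
    (hfirst : ∀ t > 0, 0 < deriv γ t)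
    (hsecond : ∀ t > 0, 0 < deriv (deriv γ) t)
    (hratio : AntitoneOn (fun t => deriv (deriv γ) t / deriv γ t) (Set.Ioi 0))
    (x y : ℝ) (hxy : x < y) (ω : ℝ) (hω : 0 < ω) (k : ℕ) :
    MonotoneOn
      (fun z =>
        (γ (ω * 2 ^ k * (z - x)) - γ (ω * 2 ^ k * (z - y))) /
          (ω * 2 ^ k * deriv γ (ω * 2 ^ k * (z - x))
            - ω * 2 ^ k * deriv γ (ω * 2 ^ k * (z - y))))
      {z : ℝ | 1 ≤ z - y ∧ z - y < z - x ∧ z - x ≤ 2} := by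
  have hIoi : IsOpen (Set.Ioi (0:ℝ)) := isOpen_Ioi
  have hdiff1 : DifferentiableOn ℝ γ (Set.Ioi 0) := hsmooth.differentiableOn (by norm_num)
  have hder : ∀ t ∈ Set.Ioi (0:ℝ), HasDerivAt γ (deriv γ t) t := fun t ht =>
    (hdiff1.differentiableAt (hIoi.mem_nhds ht)).hasDerivAt
  have hc1 : ContDiffOn ℝ 1 (deriv γ) (Set.Ioi 0) :=
    hsmooth.deriv_of_isOpen hIoi (by norm_num)
  have hder2 : ∀ t ∈ Set.Ioi (0:ℝ), HasDerivAt (deriv γ) (deriv (deriv γ) t) t := fun t ht =>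
    ((hc1.differentiableOn (by norm_num)).differentiableAt (hIoi.mem_nhds ht)).hasDerivAt
  have hcontγ : ContinuousOn γ (Set.Ioi 0) := hdiff1.continuousOn
  have hcontγ' : ContinuousOn (deriv γ) (Set.Ioi 0) := hc1.continuousOn
  -- strict monotonicity of deriv γ on (0,∞)
  have hmono' : StrictMonoOn (deriv γ) (Set.Ioi 0) := by
    apply strictMonoOn_of_deriv_pos (convex_Ioi 0) hcontγ'
    intro u hu
    rw [interior_Ioi] at hu
    exact hsecond u hu
  -- ratio inequality
  have hR : ∀ u s : ℝ, 0 < u → u ≤ s →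
      deriv (deriv γ) s * deriv γ u ≤ deriv (deriv γ) u * deriv γ s := by
    intro u s hu hus
    have hs : 0 < s := lt_of_lt_of_le hu hus
    have h := hratio (Set.mem_Ioi.2 hu) (Set.mem_Ioi.2 hs) hus
    simp only at h
    rw [div_le_div_iff₀ (hfirst s hs) (hfirst u hu)] at h
    exact h
  -- key inequality 1 : γ''(s)(γ(s)-γ(t)) ≤ γ'(s)(γ'(s)-γ'(t))
  have key1 : ∀ t s : ℝ, 0 < t → t ≤ s →
      deriv (deriv γ) s * (γ s - γ t) ≤ deriv γ s * (deriv γ s - deriv γ t) := by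
    intro t s ht hts
    set a := deriv γ s with ha
    set b := deriv (deriv γ) s with hb
    have hsub : Set.Icc t s ⊆ Set.Ioi (0:ℝ) := fun u hu => lt_of_lt_of_le ht hu.1
    have hφ : MonotoneOn (fun u => a * deriv γ u - b * γ u) (Set.Icc t s) := by
      apply monotoneOn_of_deriv_nonneg (convex_Icc t s)
      · exact ((continuousOn_const.mul hcontγ').sub (continuousOn_const.mul hcontγ)).mono hsub
      · rw [interior_Icc]
        intro u hu
        have hu0 : u ∈ Set.Ioi (0:ℝ) := hsub (Set.Ioo_subset_Icc_self hu)
        exact ((HasDerivAt.const_mul a (hder2 u hu0)).sub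
          (HasDerivAt.const_mul b (hder u hu0))).differentiableAt.differentiableWithinAt
      · rw [interior_Icc]
        intro u hu
        have hu0 : u ∈ Set.Ioi (0:ℝ) := hsub (Set.Ioo_subset_Icc_self hu)
        have hd : deriv (fun u => a * deriv γ u - b * γ u) u
            = a * deriv (deriv γ) u - b * deriv γ u :=
          ((HasDerivAt.const_mul a (hder2 u hu0)).sub
            (HasDerivAt.const_mul b (hder u hu0))).deriv
        rw [hd]
        have hru := hR u s (Set.mem_Ioi.1 hu0) (le_of_lt hu.2)
        rw [← ha, ← hb] at hru
        linarith
    have h := hφ (Set.left_mem_Icc.2 hts) (Set.right_mem_Icc.2 hts) hts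
    simp only at h
    nlinarith [h]
  -- key inequality 2 : γ'(t)(γ'(s)-γ'(t)) ≤ γ''(t)(γ(s)-γ(t))
  have key2 : ∀ t s : ℝ, 0 < t → t ≤ s →
      deriv γ t * (deriv γ s - deriv γ t) ≤ deriv (deriv γ) t * (γ s - γ t) := by
    intro t s ht hts
    set a := deriv γ t with ha
    set b := deriv (deriv γ) t with hb
    have hsub : Set.Icc t s ⊆ Set.Ioi (0:ℝ) := fun u hu => lt_of_lt_of_le ht hu.1
    have hψ : MonotoneOn (fun u => b * γ u - a * deriv γ u) (Set.Icc t s) := by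
      apply monotoneOn_of_deriv_nonneg (convex_Icc t s)
      · exact ((continuousOn_const.mul hcontγ).sub (continuousOn_const.mul hcontγ')).mono hsub
      · rw [interior_Icc]
        intro u hu
        have hu0 : u ∈ Set.Ioi (0:ℝ) := hsub (Set.Ioo_subset_Icc_self hu)
        exact ((HasDerivAt.const_mul b (hder u hu0)).sub
          (HasDerivAt.const_mul a (hder2 u hu0))).differentiableAt.differentiableWithinAt
      · rw [interior_Icc]
        intro u hu
        have hu0 : u ∈ Set.Ioi (0:ℝ) := hsub (Set.Ioo_subset_Icc_self hu)
        have hd : deriv (fun u => b * γ u - a * deriv γ u) u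
            = b * deriv γ u - a * deriv (deriv γ) u :=
          ((HasDerivAt.const_mul b (hder u hu0)).sub
            (HasDerivAt.const_mul a (hder2 u hu0))).deriv
        rw [hd]
        have hru := hR t u ht (le_of_lt hu.1)
        rw [← ha, ← hb] at hru
        linarith
    have h := hψ (Set.left_mem_Icc.2 hts) (Set.right_mem_Icc.2 hts) hts
    simp only at h
    nlinarith [h]
  -- monotonicity of g in the first variable
  have gmono1 : ∀ t s₁ s₂ : ℝ, 0 < t → t < s₁ → s₁ ≤ s₂ →
      (γ s₁ - γ t) / (deriv γ s₁ - deriv γ t) ≤ (γ s₂ - γ t) / (deriv γ s₂ - deriv γ t) := by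
    intro t s₁ s₂ ht hts hss
    have h0 : ∀ s ∈ Set.Icc s₁ s₂, 0 < deriv γ s - deriv γ t ∧ s ∈ Set.Ioi (0:ℝ) := by
      intro s hs
      have hts' : t < s := lt_of_lt_of_le hts hs.1
      have hs0 : (0:ℝ) < s := lt_trans ht hts'
      exact ⟨sub_pos.2 (hmono' (Set.mem_Ioi.2 ht) (Set.mem_Ioi.2 hs0) hts'), Set.mem_Ioi.2 hs0⟩
    have hH : ∀ s ∈ Set.Icc s₁ s₂,
        HasDerivAt (fun s => (γ s - γ t) / (deriv γ s - deriv γ t))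
          ((deriv γ s * (deriv γ s - deriv γ t) - (γ s - γ t) * deriv (deriv γ) s)
            / (deriv γ s - deriv γ t) ^ 2) s := by
      intro s hs
      obtain ⟨hD, hs0⟩ := h0 s hs
      exact ((hder s hs0).sub_const (γ t)).div
        ((hder2 s hs0).sub_const (deriv γ t)) (ne_of_gt hD)
    have hmono : MonotoneOn (fun s => (γ s - γ t) / (deriv γ s - deriv γ t))
        (Set.Icc s₁ s₂) := by
      apply monotoneOn_of_deriv_nonneg (convex_Icc s₁ s₂)
      · exact fun s hs => (hH s hs).continuousAt.continuousWithinAt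
      · rw [interior_Icc]
        exact fun s hs =>
          (hH s (Set.Ioo_subset_Icc_self hs)).differentiableAt.differentiableWithinAt
      · rw [interior_Icc]
        intro s hs
        have hs' := Set.Ioo_subset_Icc_self hs
        rw [(hH s hs').deriv]
        obtain ⟨hD, hs0⟩ := h0 s hs'
        have hk := key1 t s ht (le_of_lt (lt_of_lt_of_le hts hs'.1))
        have hnum : 0 ≤ deriv γ s * (deriv γ s - deriv γ t)
            - (γ s - γ t) * deriv (deriv γ) s := by nlinarith
        exact div_nonneg hnum (sq_nonneg _)
    exact hmono (Set.left_mem_Icc.2 hss) (Set.right_mem_Icc.2 hss) hss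
  -- monotonicity of g in the second variable
  have gmono2 : ∀ s t₁ t₂ : ℝ, 0 < t₁ → t₁ ≤ t₂ → t₂ < s →
      (γ s - γ t₁) / (deriv γ s - deriv γ t₁) ≤ (γ s - γ t₂) / (deriv γ s - deriv γ t₂) := by
    intro s t₁ t₂ ht1 ht12 hts
    have hs0 : s ∈ Set.Ioi (0:ℝ) := Set.mem_Ioi.2 (lt_trans (lt_of_lt_of_le ht1 ht12) hts)
    have h0 : ∀ u ∈ Set.Icc t₁ t₂, 0 < deriv γ s - deriv γ u ∧ u ∈ Set.Ioi (0:ℝ) := by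
      intro u hu
      have hu0 : (0:ℝ) < u := lt_of_lt_of_le ht1 hu.1
      have hus : u < s := lt_of_le_of_lt hu.2 hts
      exact ⟨sub_pos.2 (hmono' (Set.mem_Ioi.2 hu0) hs0 hus), Set.mem_Ioi.2 hu0⟩
    have hH : ∀ u ∈ Set.Icc t₁ t₂,
        HasDerivAt (fun u => (γ s - γ u) / (deriv γ s - deriv γ u))
          ((-(deriv γ u) * (deriv γ s - deriv γ u)
            - (γ s - γ u) * -(deriv (deriv γ) u)) / (deriv γ s - deriv γ u) ^ 2) u := by
      intro u hu
      obtain ⟨hD, hu0⟩ := h0 u hu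
      exact (HasDerivAt.const_sub (γ s) (hder u hu0)).div
        (HasDerivAt.const_sub (deriv γ s) (hder2 u hu0)) (ne_of_gt hD)
    have hmono : MonotoneOn (fun u => (γ s - γ u) / (deriv γ s - deriv γ u))
        (Set.Icc t₁ t₂) := by
      apply monotoneOn_of_deriv_nonneg (convex_Icc t₁ t₂)
      · exact fun u hu => (hH u hu).continuousAt.continuousWithinAt
      · rw [interior_Icc]
        exact fun u hu =>
          (hH u (Set.Ioo_subset_Icc_self hu)).differentiableAt.differentiableWithinAt
      · rw [interior_Icc]
        intro u hu
        have hu' := Set.Ioo_subset_Icc_self hu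
        rw [(hH u hu').deriv]
        obtain ⟨hD, hu0⟩ := h0 u hu'
        have hk := key2 u s (Set.mem_Ioi.1 hu0)
          (le_of_lt (lt_of_le_of_lt hu'.2 hts))
        have hnum : 0 ≤ -(deriv γ u) * (deriv γ s - deriv γ u)
            - (γ s - γ u) * -(deriv (deriv γ) u) := by nlinarith
        exact div_nonneg hnum (sq_nonneg _)
    exact hmono (Set.left_mem_Icc.2 ht12) (Set.right_mem_Icc.2 ht12) ht12
  -- main argument
  intro z₁ h₁ z₂ h₂ hz
  obtain ⟨hy1, hyx1, hx1⟩ := h₁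
  obtain ⟨hy2, hyx2, hx2⟩ := h₂
  set c := ω * 2 ^ k with hcdef
  have hc : 0 < c := by positivity
  simp only
  have ht1 : 0 < c * (z₁ - y) :=
    lt_of_lt_of_le hc (le_mul_of_one_le_right hc.le hy1)
  have hts1 : c * (z₁ - y) < c * (z₁ - x) := by
    exact mul_lt_mul_of_pos_left hyx1 hc
  have hs12 : c * (z₁ - x) ≤ c * (z₂ - x) :=
    mul_le_mul_of_nonneg_left (by linarith) hc.le
  have ht12 : c * (z₁ - y) ≤ c * (z₂ - y) :=
    mul_le_mul_of_nonneg_left (by linarith) hc.le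
  have hts2 : c * (z₂ - y) < c * (z₂ - x) := mul_lt_mul_of_pos_left hyx2 hc
  have step1 := gmono1 (c * (z₁ - y)) (c * (z₁ - x)) (c * (z₂ - x)) ht1 hts1 hs12
  have step2 := gmono2 (c * (z₂ - x)) (c * (z₁ - y)) (c * (z₂ - y)) ht1 ht12 hts2
  have hg : (γ (c * (z₁ - x)) - γ (c * (z₁ - y)))
        / (deriv γ (c * (z₁ - x)) - deriv γ (c * (z₁ - y)))
      ≤ (γ (c * (z₂ - x)) - γ (c * (z₂ - y)))
        / (deriv γ (c * (z₂ - x)) - deriv γ (c * (z₂ - y))) :=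
    le_trans step1 step2
  have e1 : c * deriv γ (c * (z₁ - x)) - c * deriv γ (c * (z₁ - y))
      = (deriv γ (c * (z₁ - x)) - deriv γ (c * (z₁ - y))) * c := by ring
  have e2 : c * deriv γ (c * (z₂ - x)) - c * deriv γ (c * (z₂ - y))
      = (deriv γ (c * (z₂ - x)) - deriv γ (c * (z₂ - y))) * c := by ring
  rw [e1, e2]
  have hfinal := div_le_div_of_nonneg_right hg hc.le
  rw [div_div, div_div] at hfinal
  exact hfinal
end

section
/- Let P be a real monic polynomial of degree n ≥ 1, and let U ⊂ ℝ be the union of the real roots of P' and of P''. Then there exists a constant C > 0 depending only on n such that for every δ > 0 and every z ∈ ℝ with dist(z, U) > δ, one has |P'(z)| ≥ C·δ^{n−1}. -/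
open Polynomial

/-- Sign constancy: a continuous nonvanishing function on an interval has constant sign. -/
lemma same_sign_aux {f : ℝ → ℝ} (hc : Continuous f) {a b : ℝ}
    (h0 : ∀ x ∈ Set.Icc a b, f x ≠ 0) {x y : ℝ}
    (hx : x ∈ Set.Icc a b) (hy : y ∈ Set.Icc a b) : 0 < f x * f y := by
  rcases lt_trichotomy (f x * f y) 0 with h | h | h
  · exfalso
    have h0m : (0:ℝ) ∈ Set.uIcc (f x) (f y) := by
      rw [Set.mem_uIcc]
      rcases mul_neg_iff.mp h with ⟨h1, h2⟩ | ⟨h1, h2⟩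
      · exact Or.inr ⟨h2.le, h1.le⟩
      · exact Or.inl ⟨h1.le, h2.le⟩
    have hsub : Set.uIcc x y ⊆ Set.Icc a b := by
      intro t ht
      rcases Set.mem_uIcc.mp ht with ⟨ht1, ht2⟩ | ⟨ht1, ht2⟩ <;>
        exact ⟨by linarith [hx.1, hy.1], by linarith [hx.2, hy.2]⟩
    obtain ⟨c, hc1, hc2⟩ := intermediate_value_uIcc (hc.continuousOn) h0m
    exact h0 c (hsub hc1) hc2
  · exfalso
    rcases mul_eq_zero.mp h with h1 | h1
    · exact h0 x hx h1
    · exact h0 y hy h1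
  · exact h

/-- Finite-difference lower bound: a polynomial with coefficient c in degree m attains
    values of size ≥ |c| h^m m! / 2^m on any interval [a, a + m h]. -/
lemma diff_bound : ∀ (m : ℕ) (Q : Polynomial ℝ), Q.natDegree ≤ m → ∀ (a h : ℝ), 0 ≤ h →
    ∃ x ∈ Set.Icc a (a + m * h),
      |Q.coeff m| * h ^ m * m.factorial / 2 ^ m ≤ |Q.eval x| := by
  intro m
  induction m with
  | zero =>
    intro Q hQ a h hh
    refine ⟨a, by simp, ?_⟩
    conv_rhs => rw [Polynomial.eq_C_of_natDegree_le_zero hQ]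
    simp
  | succ m ih =>
    intro Q hQ a h hh
    set R : Polynomial ℝ := (taylor h) Q - Q with hR
    have hRdeg : R.natDegree ≤ m := by
      rw [Polynomial.natDegree_le_iff_coeff_eq_zero]
      intro N hN
      have h1 : ((hasseDeriv N) Q).natDegree ≤ 0 := by
        refine le_trans (Polynomial.natDegree_hasseDeriv_le Q N) ?_
        omega
      have h2 : (hasseDeriv N) Q = C (((hasseDeriv N) Q).coeff 0) :=
        Polynomial.eq_C_of_natDegree_le_zero h1
      have h3 : ((hasseDeriv N) Q).coeff 0 = Q.coeff N := by
        rw [Polynomial.hasseDeriv_coeff]; simp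
      simp only [hR, Polynomial.coeff_sub, Polynomial.taylor_coeff]
      rw [h2, h3, Polynomial.eval_C, sub_self]
    have hRcoeff : R.coeff m = (m + 1 : ℝ) * Q.coeff (m + 1) * h := by
      have h1 : ((hasseDeriv m) Q).natDegree ≤ 1 := by
        refine le_trans (Polynomial.natDegree_hasseDeriv_le Q m) ?_
        omega
      have h2 := Polynomial.eq_X_add_C_of_natDegree_le_one h1
      have hc1 : ((hasseDeriv m) Q).coeff 1 = (m + 1 : ℝ) * Q.coeff (m + 1) := by
        rw [Polynomial.hasseDeriv_coeff]
        norm_num [Nat.choose_succ_self_right, add_comm 1 m]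
      have hc0 : ((hasseDeriv m) Q).coeff 0 = Q.coeff m := by
        rw [Polynomial.hasseDeriv_coeff]; simp
      simp only [hR, Polynomial.coeff_sub, Polynomial.taylor_coeff]
      rw [h2]
      simp only [Polynomial.eval_add, Polynomial.eval_mul, Polynomial.eval_C,
        Polynomial.eval_X, hc1, hc0]
      ring
    obtain ⟨x, hx, hxb⟩ := ih R hRdeg a h hh
    have hRx : R.eval x = Q.eval (x + h) - Q.eval x := by
      simp [hR, Polynomial.taylor_eval]
    have habs : |R.coeff m| = (m + 1 : ℝ) * |Q.coeff (m + 1)| * h := by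
      rw [hRcoeff, abs_mul, abs_mul]
      rw [abs_of_nonneg hh, abs_of_nonneg (by positivity : (0:ℝ) ≤ (m + 1 : ℝ))]
    set T : ℝ := |Q.coeff (m + 1)| * h ^ (m + 1) * (m + 1).factorial / 2 ^ (m + 1) with hT
    have h2T : 2 * T ≤ |Q.eval (x + h)| + |Q.eval x| := by
      have hb2 : |R.coeff m| * h ^ m * m.factorial / 2 ^ m = 2 * T := by
        rw [habs, hT]
        rw [Nat.factorial_succ]
        push_cast
        ring
      calc 2 * T = |R.coeff m| * h ^ m * m.factorial / 2 ^ m := hb2.symm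
        _ ≤ |R.eval x| := hxb
        _ = |Q.eval (x + h) - Q.eval x| := by rw [hRx]
        _ ≤ |Q.eval (x + h)| + |Q.eval x| := abs_sub _ _
    obtain ⟨hx1, hx2⟩ := hx
    rcases le_total (|Q.eval x|) (|Q.eval (x + h)|) with hle | hle
    · refine ⟨x + h, ⟨by linarith, by push_cast; linarith⟩, by linarith⟩
    · refine ⟨x, ⟨hx1, by push_cast; nlinarith⟩, by linarith⟩

/-- On a symmetric interval where f and deriv f don't vanish, |f| is maximized at the
    center on one of the two halves. -/
lemma half_max {f : ℝ → ℝ} {z δ : ℝ} (hδ : 0 < δ) (hc : Continuous f)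
    (hd : Differentiable ℝ f) (hcd : Continuous (deriv f))
    (h1 : ∀ x ∈ Set.Icc (z - δ) (z + δ), f x ≠ 0)
    (h2 : ∀ x ∈ Set.Icc (z - δ) (z + δ), deriv f x ≠ 0) :
    (∀ x ∈ Set.Icc (z - δ) z, |f x| ≤ |f z|) ∨
    (∀ x ∈ Set.Icc z (z + δ), |f x| ≤ |f z|) := by
  have hzm : z ∈ Set.Icc (z - δ) (z + δ) := ⟨by linarith, by linarith⟩
  rcases (h2 z hzm).lt_or_gt with hg | hg
  · -- deriv f < 0 on the interval, f antitone
    have hmono : AntitoneOn f (Set.Icc (z - δ) (z + δ)) := by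
      refine antitoneOn_of_deriv_nonpos (convex_Icc _ _) hc.continuousOn
        hd.differentiableOn ?_
      intro x hx
      have hx' : x ∈ Set.Icc (z - δ) (z + δ) := interior_subset hx
      nlinarith [same_sign_aux hcd h2 hzm hx']
    rcases (h1 z hzm).lt_or_gt with hfz | hfz
    · left
      intro x hx
      have hx' : x ∈ Set.Icc (z - δ) (z + δ) := ⟨hx.1, by linarith [hx.2]⟩
      have hfx : f x < 0 := by nlinarith [same_sign_aux hc h1 hzm hx']
      rw [abs_of_neg hfx, abs_of_neg hfz]
      have := hmono hx' hzm hx.2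
      linarith
    · right
      intro x hx
      have hx' : x ∈ Set.Icc (z - δ) (z + δ) := ⟨by linarith [hx.1], hx.2⟩
      have hfx : 0 < f x := by nlinarith [same_sign_aux hc h1 hzm hx']
      rw [abs_of_pos hfx, abs_of_pos hfz]
      exact hmono hzm hx' hx.1
  · -- deriv f > 0 on the interval, f monotone
    have hmono : MonotoneOn f (Set.Icc (z - δ) (z + δ)) := by
      refine monotoneOn_of_deriv_nonneg (convex_Icc _ _) hc.continuousOn
        hd.differentiableOn ?_
      intro x hx
      have hx' : x ∈ Set.Icc (z - δ) (z + δ) := interior_subset hx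
      nlinarith [same_sign_aux hcd h2 hzm hx']
    rcases (h1 z hzm).lt_or_gt with hfz | hfz
    · right
      intro x hx
      have hx' : x ∈ Set.Icc (z - δ) (z + δ) := ⟨by linarith [hx.1], hx.2⟩
      have hfx : f x < 0 := by nlinarith [same_sign_aux hc h1 hzm hx']
      rw [abs_of_neg hfx, abs_of_neg hfz]
      have := hmono hzm hx' hx.1
      linarith
    · left
      intro x hx
      have hx' : x ∈ Set.Icc (z - δ) (z + δ) := ⟨hx.1, by linarith [hx.2]⟩
      have hfx : 0 < f x := by nlinarith [same_sign_aux hc h1 hzm hx']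
      rw [abs_of_pos hfx, abs_of_pos hfz]
      exact hmono hx' hzm hx.2

theorem polynomial_derivative_lower_bound (n : ℕ) (hn : 1 ≤ n) :
    ∃ C > (0:ℝ), ∀ P : Polynomial ℝ, P.Monic → P.natDegree = n →
      ∀ δ > (0:ℝ), ∀ z : ℝ,
        (∀ u : ℝ, (P.derivative.eval u = 0 ∨ P.derivative.derivative.eval u = 0) →
          δ < |z - u|) →
        C * δ ^ (n - 1) ≤ |P.derivative.eval z| := by
  obtain ⟨m, rfl⟩ : ∃ m, n = m + 1 := ⟨n - 1, by omega⟩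
  have hCpos : (0:ℝ) < (m + 1).factorial / (2 * (m + 1)) ^ m := by positivity
  refine ⟨(m + 1).factorial / (2 * (m + 1)) ^ m, hCpos, ?_⟩
  intro P hmon hdeg δ hδ z hz
  simp only [Nat.add_sub_cancel]
  -- nonvanishing on the interval
  have hU : ∀ u ∈ Set.Icc (z - δ) (z + δ),
      P.derivative.eval u ≠ 0 ∧ P.derivative.derivative.eval u ≠ 0 := by
    intro u hu
    have habs : |z - u| ≤ δ := abs_le.mpr ⟨by linarith [hu.2], by linarith [hu.1]⟩
    constructor <;> intro h0
    · linarith [hz u (Or.inl h0)]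
    · linarith [hz u (Or.inr h0)]
  -- degree / coefficient facts
  have hdeg' : (derivative P).natDegree ≤ m := by
    have := Polynomial.natDegree_derivative_le P
    omega
  have hcoeff : (derivative P).coeff m = (m + 1 : ℝ) := by
    rw [Polynomial.coeff_derivative]
    have : P.coeff (m + 1) = 1 := by
      have := hmon.coeff_natDegree
      rwa [hdeg] at this
    rw [this, one_mul]
  -- apply half_max to f = eval of P'
  set f : ℝ → ℝ := fun x => P.derivative.eval x with hf
  have hderiv : ∀ x : ℝ, deriv f x = P.derivative.derivative.eval x := fun x =>
    Polynomial.deriv P.derivative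
  have hkey : (∀ x ∈ Set.Icc (z - δ) z, |f x| ≤ |f z|) ∨
      (∀ x ∈ Set.Icc z (z + δ), |f x| ≤ |f z|) := by
    refine half_max hδ (P.derivative.continuous) (P.derivative.differentiable) ?_ ?_ ?_
    · have : deriv f = fun x => P.derivative.derivative.eval x := funext hderiv
      rw [this]
      exact P.derivative.derivative.continuous
    · exact fun x hx => (hU x hx).1
    · intro x hx
      rw [hderiv x]
      exact (hU x hx).2
  -- the finite difference bound on the chosen half
  have hh : (0:ℝ) ≤ δ / (m + 1) := by positivity
  have hm1 : (0:ℝ) < (m + 1 : ℝ) := by positivity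
  have hlen : (m : ℝ) * (δ / (m + 1)) ≤ δ := by
    rw [div_eq_mul_inv]
    have : (m : ℝ) ≤ (m + 1 : ℝ) := by linarith
    calc (m:ℝ) * (δ * ((m:ℝ)+1)⁻¹) ≤ ((m:ℝ)+1) * (δ * ((m:ℝ)+1)⁻¹) := by
          apply mul_le_mul_of_nonneg_right this (by positivity)
      _ = δ := by field_simp
  have hBeq : |(derivative P).coeff m| * (δ / (m + 1)) ^ m * m.factorial / 2 ^ m
      = ((m + 1).factorial : ℝ) / (2 * (m + 1)) ^ m * δ ^ m := by
    rw [hcoeff, abs_of_pos hm1, Nat.factorial_succ, div_pow, mul_pow]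
    push_cast
    field_simp
    try ring
  rcases hkey with hhalf | hhalf
  · obtain ⟨x, hx, hxb⟩ := diff_bound m P.derivative hdeg' (z - δ) (δ / (m + 1)) hh
    have hxI : x ∈ Set.Icc (z - δ) z := ⟨hx.1, by linarith [hx.2, hlen]⟩
    calc ((m + 1).factorial : ℝ) / (2 * (m + 1)) ^ m * δ ^ m
        = |(derivative P).coeff m| * (δ / (m + 1)) ^ m * m.factorial / 2 ^ m := hBeq.symm
      _ ≤ |P.derivative.eval x| := hxb
      _ = |f x| := rfl
      _ ≤ |f z| := hhalf x hxI
  · obtain ⟨x, hx, hxb⟩ := diff_bound m P.derivative hdeg' z (δ / (m + 1)) hh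
    have hxI : x ∈ Set.Icc z (z + δ) := ⟨hx.1, by linarith [hx.2, hlen]⟩
    calc ((m + 1).factorial : ℝ) / (2 * (m + 1)) ^ m * δ ^ m
        = |(derivative P).coeff m| * (δ / (m + 1)) ^ m * m.factorial / 2 ^ m := hBeq.symm
      _ ≤ |P.derivative.eval x| := hxb
      _ = |f x| := rfl
      _ ≤ |f z| := hhalf x hxI
end
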